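/- Stirling comparison: for b ∈ ℝ, x = b + k/n with k a positive integer, as n → ∞ with x - b bounded away from 0 and bounded above, ln(k!/n^k) - n²∫_x^{x+1/n}∫_b^y ln(y-u) du dy = (1/2)ln n + ln√(2π) - 1/(12 n (x-b)) + O(1/n²). -/

import Mathlib

/-!
Both integrals are explicit: the inner one is `(y - b) log (y - b) - (y - b)`, and
`G s = s² / 2 · log s - 3 s² / 4` is a primitive of `s log s - s`. The scaling
`n² G (s / n) = G s - s² / 2 · log n` turns `log (k! / nᵏ) - n² ∫∫` into
`log k! + ½ log n - (G (k + 1) - G k)`. Two expansions with explicit `O(1/k²)` errors then give the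
claim, because `k ≥ δ n`: Stirling's formula with remainder
`1/(12k+6) ≤ log k! - ((k + ½) log k - k + log √(2π)) ≤ 1/(12k)`, and
`G (k + 1) - G k = (k + ½) log k - k + 1/(6k) + O(1/k²)`, which is the third-order Taylor expansion
of `log (1 + 1/k)`.
-/

open Real Filter Topology

theorem sub_le_sub_of_tendsto_of_sub_succ_le {f g : ℕ → ℝ} {a b : ℝ}
    (hf : Tendsto f atTop (𝓝 a)) (hg : Tendsto g atTop (𝓝 b)) {n : ℕ}
    (h : ∀ m, n ≤ m → f m - f (m + 1) ≤ g m - g (m + 1)) : f n - a ≤ g n - b := by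
  have hmono : Monotone fun m ↦ f (m + n) - g (m + n) :=
    monotone_nat_of_le_succ fun m ↦ by
      have := h (m + n) (Nat.le_add_left n m)
      rw [Nat.succ_add]
      linarith
  have hlim : Tendsto (fun m ↦ f (m + n) - g (m + n)) atTop (𝓝 (a - b)) :=
    (hf.sub hg).comp (tendsto_add_atTop_nat n)
  have := hmono.ge_of_tendsto hlim 0
  simp only [zero_add] at this
  linarith

namespace Stirling

theorem one_div_sub_one_div_le_log_stirlingSeq_sub {n : ℕ} (hn : n ≠ 0) :
    1 / (12 * (n : ℝ) + 6) - 1 / (12 * ((n + 1 : ℕ) : ℝ) + 6) ≤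
      log (stirlingSeq n) - log (stirlingSeq (n + 1)) := by
  obtain ⟨m, rfl⟩ := Nat.exists_eq_succ_of_ne_zero hn
  -- The first term `1 / (3 (2n+1)²)` of the series already dominates `1 / (3 (2n+1)(2n+3))`.
  have hfirst := le_hasSum (log_stirlingSeq_sdiff_hasSum m) 0 fun j _ ↦ by positivity
  refine le_trans ?_ hfirst
  push_cast
  have : (0 : ℝ) ≤ m := m.cast_nonneg
  rw [div_sub_div _ _ (by positivity) (by positivity), div_le_iff₀ (by positivity)]
  field_simp
  nlinarith

theorem log_stirlingSeq_sub_log_sqrt_pi_le {n : ℕ} (hn : n ≠ 0) :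
    log (stirlingSeq n) - log √π ≤ 1 / (12 * n) := by
  have := sub_le_sub_of_tendsto_of_sub_succ_le (tendsto_stirlingSeq_sqrt_pi.log (by positivity))
    (tendsto_const_div_atTop_nhds_zero_nat (1 / 12)) (n := n) fun m hm ↦ by
      grw [log_stirlingSeq_sdiff_le m]
      have : (1 : ℝ) ≤ m := by exact_mod_cast Nat.one_le_iff_ne_zero.2 hn |>.trans hm
      refine le_of_eq ?_
      push_cast
      field_simp
      ring
  simp only [sub_zero] at this
  convert this using 1
  ring

theorem one_div_le_log_stirlingSeq_sub_log_sqrt_pi {n : ℕ} (hn : n ≠ 0) :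
    1 / (12 * (n : ℝ) + 6) ≤ log (stirlingSeq n) - log √π := by
  have hlim : Tendsto (fun m : ℕ ↦ 1 / (12 * (m : ℝ) + 6)) atTop (𝓝 0) :=
    tendsto_const_nhds.div_atTop <| tendsto_atTop_add_const_right _ _ <|
      tendsto_natCast_atTop_atTop.const_mul_atTop (by norm_num)
  have := sub_le_sub_of_tendsto_of_sub_succ_le hlim
    (tendsto_stirlingSeq_sqrt_pi.log (by positivity)) (n := n) fun m hm ↦
      one_div_sub_one_div_le_log_stirlingSeq_sub (by omega)
  simpa using this

theorem abs_log_factorial_sub_stirling_le {n : ℕ} (hn : n ≠ 0) :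
    |log n.factorial - ((n + 1 / 2) * log n - n + log √(2 * π)) - 1 / (12 * n)| ≤
      1 / (24 * n ^ 2) := by
  have hn' : (1 : ℝ) ≤ n := by exact_mod_cast Nat.one_le_iff_ne_zero.2 hn
  have hremainder : log n.factorial - ((n + 1 / 2) * log n - n + log √(2 * π)) =
      log (stirlingSeq n) - log √π := by
    rw [log_stirlingSeq_formula, log_mul two_ne_zero (by positivity), log_div (by positivity)
      (exp_ne_zero 1), log_exp, log_sqrt (by positivity), log_sqrt pi_pos.le,
      log_mul two_ne_zero pi_ne_zero]
    ring
  have hupper := log_stirlingSeq_sub_log_sqrt_pi_le hn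
  have hlower := one_div_le_log_stirlingSeq_sub_log_sqrt_pi hn
  have hgap : 1 / (12 * (n : ℝ)) - 1 / (12 * n + 6) ≤ 1 / (24 * n ^ 2) := by
    rw [div_sub_div _ _ (by positivity) (by positivity),
      div_le_div_iff₀ (by positivity) (by positivity)]
    nlinarith
  rw [hremainder, abs_le]
  constructor <;> linarith

end Stirling

theorem nonneg_of_hasDerivAt_nonneg {f f' : ℝ → ℝ}
    (hf : ∀ x, 0 ≤ x → HasDerivAt f (f' x) x) (hf' : ∀ x, 0 < x → 0 ≤ f' x) (h0 : f 0 = 0)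
    {t : ℝ} (ht : 0 ≤ t) : 0 ≤ f t := by
  refine h0 ▸ monotoneOn_of_hasDerivWithinAt_nonneg (convex_Ici 0)
    (fun x hx ↦ (hf x hx).continuousAt.continuousWithinAt)
    (fun x hx ↦ (hf x (interior_subset hx)).hasDerivWithinAt) (fun x hx ↦ hf' x ?_)
    Set.self_mem_Ici ht ht
  simpa using hx

theorem hasDerivAt_log_one_add {x : ℝ} (hx : -1 < x) :
    HasDerivAt (fun t ↦ log (1 + t)) (1 / (1 + x)) x := by
  simpa [one_div] using ((hasDerivAt_id' x).const_add 1).log (by linarith)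

theorem log_one_add_le_cubic {t : ℝ} (ht : 0 ≤ t) : log (1 + t) ≤ t - t ^ 2 / 2 + t ^ 3 / 3 :=
  sub_nonneg.1 <| nonneg_of_hasDerivAt_nonneg
    (f := fun t ↦ t - t ^ 2 / 2 + t ^ 3 / 3 - log (1 + t)) (f' := fun x ↦ x ^ 3 / (1 + x))
    (fun x hx ↦ by
      refine ((((hasDerivAt_id x).sub ((hasDerivAt_pow 2 x).div_const 2)).add
        ((hasDerivAt_pow 3 x).div_const 3)).sub
          (hasDerivAt_log_one_add (by linarith))).congr_deriv ?_
      field_simp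
      ring)
    (fun x hx ↦ by positivity) (by simp) ht

theorem quartic_le_log_one_add {t : ℝ} (ht : 0 ≤ t) :
    t - t ^ 2 / 2 + t ^ 3 / 3 - t ^ 4 / 4 ≤ log (1 + t) :=
  sub_nonneg.1 <| nonneg_of_hasDerivAt_nonneg
    (f := fun t ↦ log (1 + t) - (t - t ^ 2 / 2 + t ^ 3 / 3 - t ^ 4 / 4))
    (f' := fun x ↦ x ^ 4 / (1 + x))
    (fun x hx ↦ by
      refine ((hasDerivAt_log_one_add (by linarith)).sub ((((hasDerivAt_id x).sub
        ((hasDerivAt_pow 2 x).div_const 2)).add ((hasDerivAt_pow 3 x).div_const 3)).sub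
        ((hasDerivAt_pow 4 x).div_const 4))).congr_deriv ?_
      field_simp
      ring)
    (fun x hx ↦ by positivity) (by simp) ht

noncomputable def iteratedPrimitiveLog (s : ℝ) : ℝ := s ^ 2 / 2 * log s - 3 / 4 * s ^ 2

theorem hasDerivAt_iteratedPrimitiveLog {s : ℝ} (hs : s ≠ 0) :
    HasDerivAt iteratedPrimitiveLog (s * log s - s) s := by
  refine ((((hasDerivAt_pow 2 s).div_const 2).mul (hasDerivAt_log hs)).sub
    ((hasDerivAt_pow 2 s).const_mul (3 / 4))).congr_deriv ?_
  field_simp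
  ring

theorem integral_mul_log_sub_self {a b : ℝ} (ha : 0 < a) (hb : 0 < b) :
    ∫ s in a..b, (s * log s - s) = iteratedPrimitiveLog b - iteratedPrimitiveLog a := by
  refine intervalIntegral.integral_eq_sub_of_hasDerivAt (fun s hs ↦ ?_)
    (by exact (continuous_mul_log.sub continuous_id).intervalIntegrable _ _)
  exact hasDerivAt_iteratedPrimitiveLog (lt_min ha hb |>.trans_le hs.1).ne'

theorem integral_log_sub (b y : ℝ) :
    ∫ u in b..y, log (y - u) = (y - b) * log (y - b) - (y - b) := by
  rw [intervalIntegral.integral_comp_sub_left (fun u ↦ log u) y, sub_self, integral_log_from_zero]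

theorem integral_integral_log_sub {b x c : ℝ} (hx : b < x) (hc : b < c) :
    ∫ y in x..c, ∫ u in b..y, log (y - u) =
      iteratedPrimitiveLog (c - b) - iteratedPrimitiveLog (x - b) := by
  simp_rw [integral_log_sub]
  rw [intervalIntegral.integral_comp_sub_right (fun s ↦ s * log s - s)]
  exact integral_mul_log_sub_self (sub_pos.2 hx) (sub_pos.2 hc)

theorem sq_mul_iteratedPrimitiveLog_div {s n : ℝ} (hs : s ≠ 0) (hn : n ≠ 0) :
    n ^ 2 * iteratedPrimitiveLog (s / n) = iteratedPrimitiveLog s - s ^ 2 / 2 * log n := by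
  rw [iteratedPrimitiveLog, iteratedPrimitiveLog, log_div hs hn]
  field_simp
  ring

theorem sq_mul_integral_integral_log_sub (b : ℝ) {n k : ℝ} (hn : 0 < n) (hk : 0 < k) :
    n ^ 2 * ∫ y in (b + k / n)..(b + k / n + 1 / n), ∫ u in b..y, log (y - u) =
      iteratedPrimitiveLog (k + 1) - iteratedPrimitiveLog k - (k + 1 / 2) * log n := by
  have hkn : 0 < k / n := by positivity
  have h1n : 0 < 1 / n := by positivity
  rw [integral_integral_log_sub (by linarith) (by linarith),
    show b + k / n + 1 / n - b = (k + 1) / n by ring, add_sub_cancel_left, mul_sub,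
    sq_mul_iteratedPrimitiveLog_div (by positivity) hn.ne',
    sq_mul_iteratedPrimitiveLog_div hk.ne' hn.ne']
  ring

theorem abs_iteratedPrimitiveLog_add_one_sub_le {k : ℝ} (hk : 1 ≤ k) :
    |iteratedPrimitiveLog (k + 1) - iteratedPrimitiveLog k -
        ((k + 1 / 2) * log k - k + 1 / (6 * k))| ≤ 1 / (2 * k ^ 2) := by
  have hk0 : 0 < k := by linarith
  set t := 1 / k with ht
  have ht0 : 0 < t := by positivity
  have ht1 : t ≤ 1 := by rw [ht, div_le_one hk0]; exact hk
  have hdiff : iteratedPrimitiveLog (k + 1) - iteratedPrimitiveLog k -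
      ((k + 1 / 2) * log k - k + 1 / (6 * k)) =
      (1 + t) ^ 2 / (2 * t ^ 2) * log (1 + t) - (1 / (2 * t) + 3 / 4 + t / 6) := by
    have : log (k + 1) = log (1 + t) + log k := by
      rw [← log_mul (by positivity) hk0.ne', ht]
      congr 1
      field_simp
    rw [iteratedPrimitiveLog, iteratedPrimitiveLog, this, ht]
    field_simp
    ring
  have hc : 0 < (1 + t) ^ 2 / (2 * t ^ 2) := by positivity
  have hkt : 1 / (2 * k ^ 2) = t ^ 2 / 2 := by rw [ht]; field_simp
  rw [hdiff, hkt, abs_le]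
  constructor
  · have := mul_le_mul_of_nonneg_left (quartic_le_log_one_add ht0.le) hc.le
    have hexp : (1 + t) ^ 2 / (2 * t ^ 2) * (t - t ^ 2 / 2 + t ^ 3 / 3 - t ^ 4 / 4) =
        1 / (2 * t) + 3 / 4 + t / 6 + t ^ 2 / 12 + t ^ 3 / 6 - (1 + t) ^ 2 * t ^ 2 / 8 := by
      field_simp
      ring
    have h4 : (1 + t) ^ 2 * t ^ 2 ≤ 4 * t ^ 2 :=
      mul_le_mul_of_nonneg_right (by nlinarith) (sq_nonneg t)
    nlinarith
  · have := mul_le_mul_of_nonneg_left (log_one_add_le_cubic ht0.le) hc.le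
    have hexp : (1 + t) ^ 2 / (2 * t ^ 2) * (t - t ^ 2 / 2 + t ^ 3 / 3) =
        1 / (2 * t) + 3 / 4 + t / 6 + t ^ 2 / 12 + t ^ 3 / 6 := by
      field_simp
      ring
    nlinarith

theorem stirling_comparison_general (δ Δ : ℝ) (hδ : 0 < δ) :
    ∃ C : ℝ, ∀ n : ℕ, 1 ≤ n → ∀ b : ℝ, ∀ k : ℕ, 0 < k →
      δ ≤ (k : ℝ) / n → (k : ℝ) / n ≤ Δ →
      |Real.log ((k.factorial : ℝ) / (n : ℝ) ^ k) -
          (n : ℝ) ^ 2 *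
            (∫ y in (b + (k : ℝ) / n)..(b + (k : ℝ) / n + 1 / (n : ℝ)),
              ∫ u in b..y, Real.log (y - u)) -
          ((1 / 2) * Real.log n + Real.log (Real.sqrt (2 * Real.pi)) -
            1 / (12 * n * ((k : ℝ) / n)))| ≤ C / (n : ℝ) ^ 2 := by
  refine ⟨1 / δ ^ 2, fun n hn b k hk hδk _ ↦ ?_⟩
  have hn0 : (0 : ℝ) < n := by exact_mod_cast hn
  have hk1 : (1 : ℝ) ≤ k := by exact_mod_cast hk
  have hstirling := Stirling.abs_log_factorial_sub_stirling_le hk.ne'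
  have hprimitive := abs_iteratedPrimitiveLog_add_one_sub_le hk1
  have hsum : 1 / (24 * (k : ℝ) ^ 2) + 1 / (2 * k ^ 2) ≤ 1 / k ^ 2 := by
    field_simp
    norm_num
  have hk_sq : 1 / (k : ℝ) ^ 2 ≤ 1 / δ ^ 2 / n ^ 2 := by
    rw [div_div, ← mul_pow]
    exact one_div_le_one_div_of_le (by positivity)
      (pow_le_pow_left₀ (by positivity) ((le_div_iff₀ hn0).1 hδk) 2)
  have hsixth : 1 / (6 * (k : ℝ)) = 2 * (1 / (12 * k)) := by field_simp; norm_num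
  rw [sq_mul_integral_integral_log_sub b hn0 (by positivity), log_div (by positivity)
    (by positivity), log_pow, show 12 * (n : ℝ) * (k / n) = 12 * k by field_simp]
  rw [abs_le] at *
  constructor <;> linarith

/-- Stirling comparison: for `x = b + k/n` with `δ ≤ x - b ≤ Δ`,
`ln(k!/nᵏ) - n²∫_x^{x+1/n}∫_b^y ln(y-u) du dy
  = (1/2)ln n + ln√(2π) - 1/(12n(x-b)) + O(1/n²)`, uniformly in `b, k`. -/
theorem stirling_comparison (δ Δ : ℝ) (hδ : 0 < δ) (hΔ : δ ≤ Δ) :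
    ∃ C : ℝ, ∀ n : ℕ, 1 ≤ n → ∀ b : ℝ, ∀ k : ℕ, 0 < k →
      δ ≤ (k : ℝ) / n → (k : ℝ) / n ≤ Δ →
      |Real.log ((k.factorial : ℝ) / (n : ℝ) ^ k) -
          (n : ℝ) ^ 2 *
            (∫ y in (b + (k : ℝ) / n)..(b + (k : ℝ) / n + 1 / (n : ℝ)),
              ∫ u in b..y, Real.log (y - u)) -
          ((1 / 2) * Real.log n + Real.log (Real.sqrt (2 * Real.pi)) -
            1 / (12 * n * ((k : ℝ) / n)))| ≤ C / (n : ℝ) ^ 2 :=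
  stirling_comparison_general δ Δ hδ
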